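/- Under joint symmetry, for symmetric grading schemes B₁, B₂: if α_m > α_d and E[|q - B₁(s)|] ≥ E[|q - B₂(s)|], then E[h(q,B₁(s))] ≥ E[h(q,B₂(s))]; and if α_m < α_d under the same expectation inequality, then E[h(q,B₁(s))] ≤ E[h(q,B₂(s))]. -/
import Mathlib


open MeasureTheory Set

/-- (De)motivation function: quality change of a student with true quality `q`
receiving grade `g`. -/
noncomputable def motiv (αm αd q g : ℝ) : ℝ :=
  if q ≤ g then αm * (g - q) else -(αd * (q - g))

lemma motiv_add (αm αd q g : ℝ) :
    motiv αm αd q g + motiv αm αd (1 - q) (1 - g) = (αm - αd) * |q - g| := by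
  unfold motiv
  rcases le_or_gt q g with h | h
  · rw [if_pos h, abs_of_nonpos (by linarith)]
    rcases eq_or_lt_of_le h with rfl | h'
    · simp
    · rw [if_neg (by simp; linarith)]; ring
  · rw [if_neg (by linarith), if_pos (by linarith), abs_of_pos (by linarith)]; ring

lemma pre_eq : (fun x : ℝ × ℝ => ((1:ℝ),(1:ℝ)) - x) ⁻¹' (Icc (0:ℝ) 1 ×ˢ Icc (0:ℝ) 1)
    = Icc (0:ℝ) 1 ×ˢ Icc (0:ℝ) 1 := by
  ext p
  simp only [mem_preimage, mem_prod, Prod.fst_sub, Prod.snd_sub, mem_Icc]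
  constructor <;> rintro ⟨⟨a,b⟩,c,d⟩ <;> refine ⟨⟨?_,?_⟩,?_,?_⟩ <;> linarith

lemma half_id (αm αd : ℝ) (f : ℝ → ℝ → ℝ) (B : ℝ → ℝ)
    (hfsymm : ∀ q ∈ Icc (0 : ℝ) 1, ∀ s ∈ Icc (0 : ℝ) 1, f q s = f (1 - q) (1 - s))
    (hBsymm : ∀ s ∈ Icc (0 : ℝ) 1, B (1 - s) = 1 - B s)
    (hm : IntegrableOn (fun p : ℝ × ℝ => f p.1 p.2 * motiv αm αd p.1 (B p.2))
      (Icc (0 : ℝ) 1 ×ˢ Icc (0 : ℝ) 1) volume)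
    (ha : IntegrableOn (fun p : ℝ × ℝ => f p.1 p.2 * |p.1 - B p.2|)
      (Icc (0 : ℝ) 1 ×ˢ Icc (0 : ℝ) 1) volume) :
    (∫ p in Icc (0 : ℝ) 1 ×ˢ Icc (0 : ℝ) 1, f p.1 p.2 * motiv αm αd p.1 (B p.2))
      = ((αm - αd) / 2) * ∫ p in Icc (0 : ℝ) 1 ×ˢ Icc (0 : ℝ) 1, f p.1 p.2 * |p.1 - B p.2| := by
  set T : Set (ℝ × ℝ) := Icc (0:ℝ) 1 ×ˢ Icc (0:ℝ) 1 with hT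
  have hTm : MeasurableSet T := (measurableSet_Icc.prod measurableSet_Icc)
  have hmp : MeasurePreserving (fun x : ℝ × ℝ => ((1:ℝ),(1:ℝ)) - x) volume volume :=
    Measure.measurePreserving_sub_left volume (1,1)
  have hemb : MeasurableEmbedding (fun x : ℝ × ℝ => ((1:ℝ),(1:ℝ)) - x) :=
    (MeasurableEquiv.subLeft ((1:ℝ),(1:ℝ))).measurableEmbedding
  -- reflected integral
  have hrefl : ∀ g : ℝ × ℝ → ℝ,
      (∫ p in T, g (((1:ℝ),(1:ℝ)) - p)) = ∫ p in T, g p := by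
    intro g
    have := hmp.setIntegral_preimage_emb hemb g T
    rwa [pre_eq] at this
  have hpt : ∀ p ∈ T, f (1 - p.1) (1 - p.2) * motiv αm αd (1 - p.1) (B (1 - p.2))
      = f p.1 p.2 * motiv αm αd (1 - p.1) (1 - B p.2) := by
    rintro ⟨q, s⟩ ⟨hq, hs⟩
    simp only at *
    rw [← hfsymm q hq s hs, hBsymm s hs]
  have hI : (∫ p in T, f p.1 p.2 * motiv αm αd p.1 (B p.2))
      = ∫ p in T, f p.1 p.2 * motiv αm αd (1 - p.1) (1 - B p.2) := by
    rw [← hrefl (fun p => f p.1 p.2 * motiv αm αd p.1 (B p.2))]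
    simp only [Prod.fst_sub, Prod.snd_sub]
    exact setIntegral_congr_fun hTm (fun p hp => hpt p hp)
  have heq2 : ∀ p ∈ T, f p.1 p.2 * motiv αm αd (1 - p.1) (1 - B p.2)
      = (αm - αd) * (f p.1 p.2 * |p.1 - B p.2|) - f p.1 p.2 * motiv αm αd p.1 (B p.2) := by
    intro p _
    have h := motiv_add αm αd p.1 (B p.2)
    linear_combination f p.1 p.2 * h
  have hm2 : IntegrableOn (fun p : ℝ × ℝ => f p.1 p.2 * motiv αm αd (1 - p.1) (1 - B p.2))
      T volume := by
    refine IntegrableOn.congr_fun ((ha.const_mul (αm - αd)).sub hm) (fun p hp => ?_) hTm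
    simp only [Pi.sub_apply]
    linarith [heq2 p hp]
  have hsum : (∫ p in T, f p.1 p.2 * motiv αm αd p.1 (B p.2))
      + (∫ p in T, f p.1 p.2 * motiv αm αd (1 - p.1) (1 - B p.2))
      = (αm - αd) * ∫ p in T, f p.1 p.2 * |p.1 - B p.2| := by
    rw [← integral_add hm hm2, ← integral_const_mul]
    refine setIntegral_congr_fun hTm (fun p _ => ?_)
    have h := motiv_add αm αd p.1 (B p.2)
    linear_combination f p.1 p.2 * h
  rw [hI] at hsum ⊢
  linarith

theorem perf_comparison (αm αd : ℝ) (hαm : 0 ≤ αm) (hαd : 0 ≤ αd)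
    (f : ℝ → ℝ → ℝ) (B₁ B₂ : ℝ → ℝ)
    (hf0 : ∀ q ∈ Icc (0 : ℝ) 1, ∀ s ∈ Icc (0 : ℝ) 1, 0 ≤ f q s)
    (hfsymm : ∀ q ∈ Icc (0 : ℝ) 1, ∀ s ∈ Icc (0 : ℝ) 1, f q s = f (1 - q) (1 - s))
    (hB₁range : ∀ s ∈ Icc (0 : ℝ) 1, B₁ s ∈ Icc (0 : ℝ) 1)
    (hB₂range : ∀ s ∈ Icc (0 : ℝ) 1, B₂ s ∈ Icc (0 : ℝ) 1)
    (hB₁symm : ∀ s ∈ Icc (0 : ℝ) 1, B₁ (1 - s) = 1 - B₁ s)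
    (hB₂symm : ∀ s ∈ Icc (0 : ℝ) 1, B₂ (1 - s) = 1 - B₂ s)
    (hint1 : IntegrableOn (fun p : ℝ × ℝ => f p.1 p.2 * motiv αm αd p.1 (B₁ p.2))
      (Icc (0 : ℝ) 1 ×ˢ Icc (0 : ℝ) 1) volume)
    (hint2 : IntegrableOn (fun p : ℝ × ℝ => f p.1 p.2 * motiv αm αd p.1 (B₂ p.2))
      (Icc (0 : ℝ) 1 ×ˢ Icc (0 : ℝ) 1) volume)
    (hint3 : IntegrableOn (fun p : ℝ × ℝ => f p.1 p.2 * |p.1 - B₁ p.2|)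
      (Icc (0 : ℝ) 1 ×ˢ Icc (0 : ℝ) 1) volume)
    (hint4 : IntegrableOn (fun p : ℝ × ℝ => f p.1 p.2 * |p.1 - B₂ p.2|)
      (Icc (0 : ℝ) 1 ×ˢ Icc (0 : ℝ) 1) volume)
    (hE : (∫ p in Icc (0 : ℝ) 1 ×ˢ Icc (0 : ℝ) 1, f p.1 p.2 * |p.1 - B₁ p.2|) ≥
          ∫ p in Icc (0 : ℝ) 1 ×ˢ Icc (0 : ℝ) 1, f p.1 p.2 * |p.1 - B₂ p.2|) :
    (αm > αd →
      (∫ p in Icc (0 : ℝ) 1 ×ˢ Icc (0 : ℝ) 1, f p.1 p.2 * motiv αm αd p.1 (B₁ p.2)) ≥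
        ∫ p in Icc (0 : ℝ) 1 ×ˢ Icc (0 : ℝ) 1, f p.1 p.2 * motiv αm αd p.1 (B₂ p.2)) ∧
    (αm < αd →
      (∫ p in Icc (0 : ℝ) 1 ×ˢ Icc (0 : ℝ) 1, f p.1 p.2 * motiv αm αd p.1 (B₁ p.2)) ≤
        ∫ p in Icc (0 : ℝ) 1 ×ˢ Icc (0 : ℝ) 1, f p.1 p.2 * motiv αm αd p.1 (B₂ p.2)) := by
  have k1 := half_id αm αd f B₁ hfsymm hB₁symm hint1 hint3
  have k2 := half_id αm αd f B₂ hfsymm hB₂symm hint2 hint4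
  constructor <;> intro h <;> rw [k1, k2] <;> nlinarith [hE]
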